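/- arXiv:2203.03987 — 5 statements merged into one kernel-verified Lean document; each statement's English description precedes it below -/
import Mathlib

section
/- Let Λ be a free ℤ-module of rank 2 equipped with a symmetric bilinear form q. Suppose α, β is a ℤ-basis of Λ with q(α,α) = 0 (α isotropic), q(β,β) ≥ 0, and c := q(α,β) ≠ 0 (so q is nondegenerate of discriminant -c²); set d₀ := |c| > 0. Then every γ ∈ Λ with q(γ,γ) < 0 satisfies (1 + q(β,β))·q(γ,γ) ≤ -2·d₀. -/
theorem key_arith (t Mm d e s : ℤ) (ht : 1 ≤ t) (hM : 1 ≤ Mm) (hd : 1 ≤ d) (he : 0 ≤ e)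
    (hs : s = t*(t*e - 2*d*Mm)) (hneg : s < 0) : (1+e)*s ≤ -2*d := by
  have h1 : t*e - 2*d*Mm ≤ -1 := by nlinarith
  have hst : s ≤ -t := by nlinarith
  rcases le_or_gt (2*d) (t*e) with h | h
  · nlinarith
  · have h2 : t*e ≤ 2*d - 1 := by omega
    have hs2 : s ≤ t*(t*e - 2*d) := by
      nlinarith [mul_nonneg (mul_nonneg (by linarith : (0:ℤ) ≤ t) (by linarith : (0:ℤ) ≤ 2*d)) (by linarith : (0:ℤ) ≤ Mm - 1)]
    nlinarith [mul_nonneg (mul_nonneg he (by linarith : (0:ℤ) ≤ t - 1)) (by linarith : (0:ℤ) ≤ 2*d - t*e),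
      mul_nonneg (mul_nonneg he (by linarith : (0:ℤ) ≤ t)) (by linarith : (0:ℤ) ≤ 2*d - 1 - t*e),
      mul_nonneg (mul_nonneg he (by linarith : (0:ℤ) ≤ t)) (by linarith : (0:ℤ) ≤ 2*d - t*e),
      mul_nonneg (by positivity : (0:ℤ) ≤ t*e) (by linarith : (0:ℤ) ≤ 2*d - 1 - t*e)]

/-- **Rank-2 lattice inequality** (Lemma 7.3 of the paper / O'Grady, "Modular sheaves
on hyperkähler varieties", Lemma 4.3).  Let `Λ` be a free `ℤ`-module of rank `2`
with a symmetric bilinear form `q`, and `α, β` a basis with `α` isotropic,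
`q β β ≥ 0` and `q α β ≠ 0` (so `q` is nondegenerate with discriminant `-(q α β)^2`);
set `d₀ = |q α β|`.  Then every `γ` with `q γ γ < 0` satisfies
`(1 + q β β) * q γ γ ≤ -2 * d₀`. -/
theorem rank_two_lattice_inequality
    (M : Type*) [AddCommGroup M] [Module ℤ M]
    (q : M →ₗ[ℤ] M →ₗ[ℤ] ℤ) (hsymm : ∀ x y : M, q x y = q y x)
    (b : Module.Basis (Fin 2) ℤ M) (α β : M) (hα : b 0 = α) (hβ : b 1 = β)
    (hiso : q α α = 0) (hβ0 : 0 ≤ q β β) (hc : q α β ≠ 0)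
    (γ : M) (hγ : q γ γ < 0) :
    (1 + q β β) * q γ γ ≤ -2 * |q α β| := by
  obtain ⟨m, n, hqγ⟩ : ∃ m n : ℤ, q γ γ = 2*m*n*(q α β) + n^2*(q β β) := by
    refine ⟨b.repr γ 0, b.repr γ 1, ?_⟩
    conv_lhs => rw [← b.sum_repr γ]
    simp only [Fin.sum_univ_two, map_add, map_smul, LinearMap.add_apply,
      LinearMap.smul_apply, smul_eq_mul, hα, hβ, hiso]
    rw [hsymm β α]
    ring
  have hc0 : (0:ℤ) < |q α β| := abs_pos.mpr hc
  have hn0 : n ≠ 0 := by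
    rintro rfl
    rw [hqγ] at hγ; norm_num at hγ
  have hmnc : m*n*(q α β) < 0 := by
    nlinarith [mul_nonneg (sq_nonneg n) hβ0]
  have hm0 : m ≠ 0 := by
    rintro rfl; norm_num at hmnc
  have habs : |m*n*(q α β)| = |m| * |n| * |q α β| := by rw [abs_mul, abs_mul]
  have hmn : m*n*(q α β) = -(|m| * |n| * |q α β|) := by
    rw [← habs, abs_of_neg hmnc, neg_neg]
  have hqγ' : q γ γ = |n| * (|n| * (q β β) - 2 * |q α β| * |m|) := by
    rw [hqγ, ← sq_abs n]
    linear_combination 2*hmn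
  have ht1 : 1 ≤ |n| := by have := abs_pos.mpr hn0; omega
  have hM1 : 1 ≤ |m| := by have := abs_pos.mpr hm0; omega
  have := key_arith (|n|) (|m|) (|q α β|) (q β β) (q γ γ) ht1 hM1 hc0 hβ0 hqγ' hγ
  linarith
end

section
/- Let Λ = ℤ⁸ carry the symmetric bilinear form ⟨x,y⟩ = Σ_{i=0}^{3} (x_{2i}·y_{2i+1} + x_{2i+1}·y_{2i}) (the orthogonal direct sum of four hyperbolic planes, i.e. the Mukai lattice of an abelian surface). Let v ∈ Λ be primitive with ⟨v,v⟩ = 6. Let w ∈ Λ be primitive with ⟨w,v⟩ = 0 and ⟨w,w⟩ < 0, and assume there exists s ∈ Λ lying in the saturation of the subgroup ℤv + ℤw such that 0 ≤ ⟨s,s⟩, ⟨s,s⟩ < ⟨s,v⟩, and 2·⟨s,v⟩ ≤ 6 + ⟨s,s⟩. Then ⟨w,w⟩ = -6 and the divisibility of w in v^⊥ (the nonnegative generator of the subgroup {⟨w,x⟩ : x ∈ Λ, ⟨x,v⟩ = 0} of ℤ) belongs to {2, 3, 6}. -/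
/-!
Choose the multiplier `k` in `k • s = a • v + b • w` with `gcd(k, a) = 1`; this is possible
because the primitive vector `w` pairs to `1` with some lattice vector, so `gcd(k, a)` divides
`b`. Pairing with `v`, `w` and `s` gives `k⟨s,v⟩ = 6a` and
`6 b² ⟨w,w⟩ = k² (6⟨s,s⟩ - ⟨s,v⟩²)`, while coprimality forces `k · gcd(⟨s,v⟩, 6) = 6`.
The wall inequalities leave only five values of `(⟨s,s⟩, ⟨s,v⟩)`, in each of which
`k² (⟨s,v⟩² - 6⟨s,s⟩) = 36`, hence `b² ⟨w,w⟩ = -6`, so `b = ±1` and `⟨w,w⟩ = -6`.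
Finally `b = ±1` makes `⟨w, x⟩ = ±k⟨s, x⟩` on `v^⊥`, so `k ∣ div(w) ∣ ⟨w,w⟩ = -6` with
`k ∈ {2, 3, 6}`.
-/

/-- The Mukai pairing on `ℤ⁸`, the orthogonal direct sum of four hyperbolic planes
(the Mukai lattice of an abelian surface):
`⟨x,y⟩ = Σ_{i=0}^{3} (x_{2i}·y_{2i+1} + x_{2i+1}·y_{2i})`. -/
def mukaiForm (x y : Fin 8 → ℤ) : ℤ :=
  (x 0 * y 1 + x 1 * y 0) + (x 2 * y 3 + x 3 * y 2) +
  (x 4 * y 5 + x 5 * y 4) + (x 6 * y 7 + x 7 * y 6)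

/-- An element of a free `ℤ`-module is primitive if it is not `k • u` with `k ≥ 2`. -/
def IsPrimitiveMukai (v : Fin 8 → ℤ) : Prop :=
  ¬ ∃ (k : ℤ) (u : Fin 8 → ℤ), 2 ≤ k ∧ v = k • u

lemma mukaiForm_comm (x y : Fin 8 → ℤ) : mukaiForm x y = mukaiForm y x := by
  unfold mukaiForm; ring

lemma mukaiForm_add_left (x y z : Fin 8 → ℤ) :
    mukaiForm (x + y) z = mukaiForm x z + mukaiForm y z := by
  simp only [mukaiForm, Pi.add_apply]; ring

lemma mukaiForm_smul_left (c : ℤ) (x z : Fin 8 → ℤ) :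
    mukaiForm (c • x) z = c * mukaiForm x z := by
  simp only [mukaiForm, Pi.smul_apply, smul_eq_mul]; ring

lemma even_mukaiForm_self (x : Fin 8 → ℤ) : Even (mukaiForm x x) :=
  ⟨x 0 * x 1 + x 2 * x 3 + x 4 * x 5 + x 6 * x 7, by unfold mukaiForm; ring⟩

def hyperbolicPartner (i : Fin 8) : Fin 8 := ![1, 0, 3, 2, 5, 4, 7, 6] i

lemma hyperbolicPartner_hyperbolicPartner (i : Fin 8) :
    hyperbolicPartner (hyperbolicPartner i) = i := by
  revert i; decide

lemma mukaiForm_eq_sum (x y : Fin 8 → ℤ) :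
    mukaiForm x y = ∑ i, x i * y (hyperbolicPartner i) := by
  simp only [mukaiForm, hyperbolicPartner, Fin.sum_univ_eight, Matrix.cons_val]; ring

lemma IsPrimitiveMukai.gcd_eq_one {w : Fin 8 → ℤ} (hw : IsPrimitiveMukai w) :
    Finset.univ.gcd w = 1 := by
  obtain ⟨u, hu, -⟩ := Finset.univ.extract_gcd w Finset.univ_nonempty
  have hg : 0 ≤ Finset.univ.gcd w := Int.nonneg_of_normalize_eq_self Finset.normalize_gcd
  by_contra hne
  obtain h0 | h2 : Finset.univ.gcd w = 0 ∨ 2 ≤ Finset.univ.gcd w := by omega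
  · exact hw ⟨2, 0, le_rfl, funext fun i => by simp [Finset.gcd_eq_zero_iff.mp h0 i (by simp)]⟩
  · exact hw ⟨_, u, h2, funext fun i => hu i (by simp)⟩

lemma IsPrimitiveMukai.exists_mukaiForm_eq_one {w : Fin 8 → ℤ} (hw : IsPrimitiveMukai w) :
    ∃ z, mukaiForm w z = 1 := by
  obtain ⟨c, hc⟩ := Finset.univ.gcd_eq_sum_mul w
  refine ⟨c ∘ hyperbolicPartner, ?_⟩
  simp only [mukaiForm_eq_sum, Function.comp_apply, hyperbolicPartner_hyperbolicPartner, ← hc,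
    hw.gcd_eq_one]

lemma mul_mukaiForm_of_smul_eq_add {k a b : ℤ} {s v w : Fin 8 → ℤ}
    (h : k • s = a • v + b • w) (z : Fin 8 → ℤ) :
    k * mukaiForm s z = a * mukaiForm v z + b * mukaiForm w z := by
  simpa only [mukaiForm_add_left, mukaiForm_smul_left] using congrArg (mukaiForm · z) h

lemma exists_isCoprime_smul_eq_add {k a b : ℤ} {s v w z : Fin 8 → ℤ} (hk : 1 ≤ k)
    (h : k • s = a • v + b • w) (hz : mukaiForm w z = 1) :
    ∃ k' a' b' : ℤ, 1 ≤ k' ∧ IsCoprime k' a' ∧ k' • s = a' • v + b' • w := by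
  obtain ⟨g, k', a', hg, hka, rfl, rfl⟩ :=
    Int.exists_gcd_one' (Int.gcd_pos_of_ne_zero_left a (by omega : k ≠ 0))
  have hgb : (g : ℤ) ∣ b := by
    have hpair := mul_mukaiForm_of_smul_eq_add h z
    rw [hz, mul_one] at hpair
    exact ⟨k' * mukaiForm s z - a' * mukaiForm v z, by linarith⟩
  obtain ⟨b', rfl⟩ := hgb
  refine ⟨k', a', b', ?_, Int.isCoprime_iff_gcd_eq_one.mpr hka, ?_⟩
  · by_contra! hk'
    nlinarith
  · refine smul_right_injective (Fin 8 → ℤ) (r := (g : ℤ)) (by positivity) ?_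
    simpa only [smul_add, smul_smul, mul_comm] using h

lemma wall_pairing_equations {k a b : ℤ} {s v w : Fin 8 → ℤ} (h : k • s = a • v + b • w)
    (hvv : mukaiForm v v = 6) (hwv : mukaiForm w v = 0) :
    k * mukaiForm s v = 6 * a ∧
      6 * (b ^ 2 * mukaiForm w w) = k ^ 2 * (6 * mukaiForm s s - mukaiForm s v ^ 2) := by
  have hsv := mul_mukaiForm_of_smul_eq_add h v
  have hsw := mul_mukaiForm_of_smul_eq_add h w
  have hss := mul_mukaiForm_of_smul_eq_add h s
  rw [hvv, hwv] at hsv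
  rw [mukaiForm_comm v w, hwv] at hsw
  rw [mukaiForm_comm v s, mukaiForm_comm w s] at hss
  refine ⟨by linarith, ?_⟩
  linear_combination (-6 * k) * hss - (6 * b) * hsw + (k * mukaiForm s v) * hsv

lemma dvd_mukaiForm_of_smul_eq_add {k a b : ℤ} {s v w x : Fin 8 → ℤ}
    (h : k • s = a • v + b • w) (hb : IsUnit b) (hxv : mukaiForm x v = 0) :
    k ∣ mukaiForm w x := by
  have hpair := mul_mukaiForm_of_smul_eq_add h x
  rw [mukaiForm_comm v x, hxv, mul_zero, zero_add] at hpair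
  exact hb.dvd_mul_left.mp ⟨_, hpair.symm⟩

lemma Int.mul_gcd_eq_of_mul_eq_mul {k a t n : ℤ} (hk : 0 ≤ k) (hn : 0 ≤ n)
    (h : k * t = n * a) (hka : IsCoprime k a) : k * Int.gcd t n = n := by
  have hgcd : Int.gcd (k * t) (k * n) = Int.gcd (n * a) (n * k) := by rw [h, mul_comm k n]
  rw [Int.gcd_mul_left, Int.gcd_mul_left, Int.isCoprime_iff_gcd_eq_one.mp hka.symm] at hgcd
  have hgcdℤ := congrArg (fun m : ℕ => (m : ℤ)) hgcd
  push_cast at hgcdℤ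
  rwa [abs_of_nonneg hk, abs_of_nonneg hn, mul_one] at hgcdℤ

lemma wall_inequalities_cases {σ t : ℤ} (hσ : Even σ) (h0 : 0 ≤ σ) (h1 : σ < t)
    (h2 : 2 * t ≤ 6 + σ) (hneg : 6 * σ ≤ t ^ 2) :
    σ = 0 ∧ (t = 1 ∨ t = 2 ∨ t = 3) ∨ σ = 2 ∧ t = 4 ∨ σ = 4 ∧ t = 5 := by
  obtain ⟨r, rfl⟩ := hσ
  obtain ⟨hr0, hr2⟩ : 0 ≤ r ∧ r ≤ 2 := by omega
  have ht : t ≤ 5 := by omega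
  interval_cases r <;> interval_cases t <;> omega

lemma wall_multiplier_cases {k a t σ : ℤ} (hk : 0 ≤ k) (hkt : k * t = 6 * a)
    (hka : IsCoprime k a) (hσ : Even σ) (h0 : 0 ≤ σ) (h1 : σ < t) (h2 : 2 * t ≤ 6 + σ)
    (hneg : 6 * σ ≤ t ^ 2) :
    (k = 2 ∨ k = 3 ∨ k = 6) ∧ k ^ 2 * (t ^ 2 - 6 * σ) = 36 := by
  have hkg := Int.mul_gcd_eq_of_mul_eq_mul hk (by norm_num) hkt hka
  obtain rfl : k = 6 / Int.gcd t 6 :=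
    (Int.ediv_eq_of_eq_mul_left (by simp [Int.gcd_eq_zero_iff]) hkg.symm).symm
  rcases wall_inequalities_cases hσ h0 h1 h2 hneg with
    ⟨rfl, rfl | rfl | rfl⟩ | ⟨rfl, rfl⟩ | ⟨rfl, rfl⟩ <;> norm_num

lemma dvd_iff_forall_dvd_of_zmultiples_eq_closure {d k : ℤ} {S : Set ℤ}
    (h : AddSubgroup.zmultiples d = AddSubgroup.closure S) : k ∣ d ↔ ∀ t ∈ S, k ∣ t := by
  rw [← Int.mem_zmultiples_iff, ← AddSubgroup.zmultiples_le, h, AddSubgroup.closure_le]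
  simp only [Set.subset_def, SetLike.mem_coe, Int.mem_zmultiples_iff]

lemma eq_two_or_three_or_six_of_dvd {d k : ℤ} (hd0 : 0 ≤ d) (hd6 : d ∣ 6) (hkd : k ∣ d)
    (hk : k = 2 ∨ k = 3 ∨ k = 6) : d = 2 ∨ d = 3 ∨ d = 6 := by
  have hd_le : d ≤ 6 := Int.le_of_dvd (by norm_num) hd6
  rcases hk with rfl | rfl | rfl <;> interval_cases d <;> omega

theorem wall_divisor_square_and_divisibility_general
    (v w : Fin 8 → ℤ)
    (hvv : mukaiForm v v = 6)
    (hw : IsPrimitiveMukai w) (hwv : mukaiForm w v = 0) (hww : mukaiForm w w < 0)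
    (hs : ∃ s : Fin 8 → ℤ,
      (∃ k : ℤ, 1 ≤ k ∧ ∃ a b : ℤ, k • s = a • v + b • w) ∧
      0 ≤ mukaiForm s s ∧ mukaiForm s s < mukaiForm s v ∧
      2 * mukaiForm s v ≤ 6 + mukaiForm s s)
    (d : ℤ) (hd0 : 0 ≤ d)
    (hdgen : AddSubgroup.zmultiples d =
      AddSubgroup.closure {t : ℤ | ∃ x : Fin 8 → ℤ, mukaiForm x v = 0 ∧ t = mukaiForm w x}) :
    mukaiForm w w = -6 ∧ (d = 2 ∨ d = 3 ∨ d = 6) := by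
  obtain ⟨s, ⟨k₀, hk₀, a₀, b₀, h₀⟩, hσ0, hσt, h2t⟩ := hs
  obtain ⟨z, hz⟩ := hw.exists_mukaiForm_eq_one
  obtain ⟨k, a, b, hk, hka, hcomb⟩ := exists_isCoprime_smul_eq_add hk₀ h₀ hz
  obtain ⟨hkt, hkey⟩ := wall_pairing_equations hcomb hvv hwv
  have hneg : 6 * mukaiForm s s ≤ mukaiForm s v ^ 2 := by
    nlinarith [mul_nonpos_of_nonneg_of_nonpos (sq_nonneg b) hww.le]
  obtain ⟨hk236, h36⟩ :=
    wall_multiplier_cases (by omega) hkt hka (even_mukaiForm_self s) hσ0 hσt h2t hneg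
  have hbW : b ^ 2 * mukaiForm w w = -6 := by linarith
  have hb : IsUnit b :=
    (Int.squarefree_natAbs.mp (by decide +kernel) : Squarefree (6 : ℤ)) b
      ⟨-mukaiForm w w, by linear_combination hbW⟩
  have hW : mukaiForm w w = -6 := by rwa [Int.isUnit_sq hb, one_mul] at hbW
  have hdiv (c : ℤ) := dvd_iff_forall_dvd_of_zmultiples_eq_closure (k := c) hdgen
  have hd6 : d ∣ 6 := dvd_neg.mp (((hdiv d).mp dvd_rfl) _ ⟨w, hwv, hW.symm⟩)
  have hkd : k ∣ d := (hdiv k).mpr fun _ ⟨x, hxv, hx⟩ =>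
    hx ▸ dvd_mukaiForm_of_smul_eq_add hcomb hb hxv
  exact ⟨hW, eq_two_or_three_or_six_of_dvd hd0 hd6 hkd hk236⟩

/-- **Wall divisors of generalized Kummer fourfolds** (lattice-theoretic content).
Let `v` be primitive of square `6` in the Mukai lattice, `w` primitive, orthogonal
to `v`, of negative square, and suppose some `s` in the saturation of `ℤv + ℤw`
satisfies `0 ≤ ⟨s,s⟩ < ⟨s,v⟩` and `2⟨s,v⟩ ≤ 6 + ⟨s,s⟩`.  Then `⟨w,w⟩ = -6` and the
divisibility of `w` in `v^⊥` belongs to `{2, 3, 6}`. -/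
theorem wall_divisor_square_and_divisibility
    (v w : Fin 8 → ℤ)
    (hv : IsPrimitiveMukai v) (hvv : mukaiForm v v = 6)
    (hw : IsPrimitiveMukai w) (hwv : mukaiForm w v = 0) (hww : mukaiForm w w < 0)
    (hs : ∃ s : Fin 8 → ℤ,
      (∃ k : ℤ, 1 ≤ k ∧ ∃ a b : ℤ, k • s = a • v + b • w) ∧
      0 ≤ mukaiForm s s ∧ mukaiForm s s < mukaiForm s v ∧
      2 * mukaiForm s v ≤ 6 + mukaiForm s s)
    (d : ℤ) (hd0 : 0 ≤ d)
    (hdgen : AddSubgroup.zmultiples d =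
      AddSubgroup.closure {t : ℤ | ∃ x : Fin 8 → ℤ, mukaiForm x v = 0 ∧ t = mukaiForm w x}) :
    mukaiForm w w = -6 ∧ (d = 2 ∨ d = 3 ∨ d = 6) :=
  wall_divisor_square_and_divisibility_general v w hvv hw hwv hww hs d hd0 hdgen
end

section
/- Let Λ_K = ℤ⁷ carry the symmetric bilinear form q(x,y) = Σ_{i=0}^{2} (x_{2i}·y_{2i+1} + x_{2i+1}·y_{2i}) - 6·x₆·y₆ (the orthogonal direct sum U³ ⊕ ⟨-6⟩, i.e. the Beauville–Bogomolov–Fujiki lattice of a hyperkähler fourfold of Kummer type). Let h ∈ Λ_K be primitive with e := q(h,h) > 0, and let i := div(h) be the nonnegative generator of the subgroup {q(h,x) : x ∈ Λ_K} of ℤ. Then one of the following holds: (1) i = 1 and e ≡ 0 (mod 2); (2) i = 2 and e ≡ -6 (mod 8); (3) i = 3 and e ≡ -6 (mod 18); (4) i = 6 and e ≡ -6 (mod 72). -/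
/-!
The divisibility `i` divides `q(h, x)` for every `x`. Pairing `h` with basis vectors shows that
`i` divides `h₀, …, h₅` and `6 h₆`, so by primitivity `i` is prime to `h₆` and divides `6`.
Since `q(h, h) = 2 (h₀h₁ + h₂h₃ + h₄h₅) - 6 h₆²` with `i² ∣ h₀h₁ + h₂h₃ + h₄h₅`, we get
`q(h, h) ≡ -6 h₆² (mod 2 i²)`, and `h₆² ≡ 1` modulo `4` (if `2 ∣ i`) and modulo `3` (if `3 ∣ i`)
turns this into `q(h, h) ≡ -6 (mod 2 i²)`.
-/

/-- The Beauville–Bogomolov–Fujiki pairing of a hyperkähler fourfold of Kummer type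
on `ℤ⁷`, i.e. the lattice `U³ ⊕ ⟨-6⟩`:
`q(x,y) = Σ_{i=0}^{2} (x_{2i}·y_{2i+1} + x_{2i+1}·y_{2i}) - 6·x₆·y₆`. -/
def bbfKummerForm (x y : Fin 7 → ℤ) : ℤ :=
  (x 0 * y 1 + x 1 * y 0) + (x 2 * y 3 + x 3 * y 2) +
  (x 4 * y 5 + x 5 * y 4) - 6 * x 6 * y 6

/-- An element of a free `ℤ`-module is primitive if it is not `k • u` with `k ≥ 2`. -/
def IsPrimitiveKummer (v : Fin 7 → ℤ) : Prop :=
  ¬ ∃ (k : ℤ) (u : Fin 7 → ℤ), 2 ≤ k ∧ v = k • u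

theorem Int.dvd_of_zmultiples_eq_closure {i : ℤ} {S : Set ℤ}
    (hS : AddSubgroup.zmultiples i = AddSubgroup.closure S) {s : ℤ} (hs : s ∈ S) : i ∣ s :=
  Int.mem_zmultiples_iff.mp (hS ▸ AddSubgroup.subset_closure hs)

theorem Int.eq_one_or_two_or_three_or_six_of_dvd_six {i : ℤ} (hi : 0 < i) (h6 : i ∣ 6) :
    i = 1 ∨ i = 2 ∨ i = 3 ∨ i = 6 := by
  have : i ≤ 6 := Int.le_of_dvd (by norm_num) h6
  interval_cases i <;> simp_all

theorem Int.four_dvd_sq_sub_one {c : ℤ} (hc : IsCoprime 2 c) : 4 ∣ c ^ 2 - 1 :=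
  (show (4 : ℤ) ∣ 8 by norm_num).trans
    (Int.eight_dvd_sq_sub_one_of_odd (Int.isCoprime_two_left.mp hc))

theorem Int.three_dvd_sq_sub_one {c : ℤ} (hc : IsCoprime 3 c) : 3 ∣ c ^ 2 - 1 :=
  Int.prime_dvd_pow_sub_one Nat.prime_three hc.symm

theorem Int.sq_dvd_three_mul_sq_sub_one {i c : ℤ} (hi : 0 < i) (h6 : i ∣ 6)
    (hc : IsCoprime i c) : i ^ 2 ∣ 3 * (c ^ 2 - 1) := by
  rcases Int.eq_one_or_two_or_three_or_six_of_dvd_six hi h6 with rfl | rfl | rfl | rfl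
  · simp
  · exact (Int.four_dvd_sq_sub_one hc).mul_left 3
  · exact mul_dvd_mul_left 3 (Int.three_dvd_sq_sub_one hc)
  · rw [show (6 : ℤ) = 2 * 3 by norm_num] at hc
    have h12 : 4 * 3 ∣ c ^ 2 - 1 :=
      (Int.isCoprime_iff_gcd_eq_one.mpr rfl).mul_dvd
        (Int.four_dvd_sq_sub_one hc.of_mul_left_left)
        (Int.three_dvd_sq_sub_one hc.of_mul_left_right)
    rw [show (6 : ℤ) ^ 2 = 3 * (4 * 3) by norm_num]
    exact mul_dvd_mul_left 3 h12

theorem Int.neg_six_mul_sq_modEq_neg_six {i c : ℤ} (hi : 0 < i) (h6 : i ∣ 6)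
    (hc : IsCoprime i c) : -6 * c ^ 2 ≡ -6 [ZMOD 2 * i ^ 2] := by
  rw [Int.modEq_iff_dvd, show -6 - -6 * c ^ 2 = 2 * (3 * (c ^ 2 - 1)) by ring]
  exact mul_dvd_mul_left 2 (Int.sq_dvd_three_mul_sq_sub_one hi h6 hc)

theorem bbfKummerForm_self (h : Fin 7 → ℤ) :
    bbfKummerForm h h = 2 * (h 0 * h 1 + h 2 * h 3 + h 4 * h 5) - 6 * h 6 ^ 2 := by
  unfold bbfKummerForm
  ring

section bbfKummerForm

variable {i : ℤ} {h : Fin 7 → ℤ}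

theorem dvd_apply_of_forall_dvd_bbfKummerForm (H : ∀ x, i ∣ bbfKummerForm h x) {j : Fin 7}
    (hj : j ≠ 6) : i ∣ h j := by
  fin_cases j
  · simpa [bbfKummerForm] using H (Pi.single 1 1)
  · simpa [bbfKummerForm] using H (Pi.single 0 1)
  · simpa [bbfKummerForm] using H (Pi.single 3 1)
  · simpa [bbfKummerForm] using H (Pi.single 2 1)
  · simpa [bbfKummerForm] using H (Pi.single 5 1)
  · simpa [bbfKummerForm] using H (Pi.single 4 1)
  · exact absurd rfl hj

theorem dvd_six_mul_of_forall_dvd_bbfKummerForm (H : ∀ x, i ∣ bbfKummerForm h x) :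
    i ∣ 6 * h 6 := by
  simpa [bbfKummerForm] using H (Pi.single 6 1)

theorem bbfKummerForm_self_modEq (hdvd : ∀ j ≠ 6, i ∣ h j) :
    bbfKummerForm h h ≡ -6 * h 6 ^ 2 [ZMOD 2 * i ^ 2] := by
  have hprod : ∀ j k, j ≠ 6 → k ≠ 6 → i ^ 2 ∣ h j * h k := fun j k hj hk =>
    sq i ▸ mul_dvd_mul (hdvd j hj) (hdvd k hk)
  rw [Int.modEq_iff_dvd, bbfKummerForm_self,
    show ∀ a b : ℤ, -6 * b - (2 * a - 6 * b) = 2 * -a by intros; ring]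
  refine mul_dvd_mul_left 2 (dvd_neg.mpr ?_)
  exact ((hprod 0 1 (by decide) (by decide)).add (hprod 2 3 (by decide) (by decide))).add
    (hprod 4 5 (by decide) (by decide))

end bbfKummerForm

theorem IsPrimitiveKummer.eq_one_of_dvd {v : Fin 7 → ℤ} (hv : IsPrimitiveKummer v) {k : ℤ}
    (hk : 0 ≤ k) (hdvd : ∀ j, k ∣ v j) : k = 1 := by
  by_contra hk1
  rcases hk.eq_or_lt with rfl | hkpos
  · exact hv ⟨2, 0, le_rfl, funext fun j => by simpa using hdvd j⟩
  · exact hv ⟨k, fun j => v j / k, by omega,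
      funext fun j => (Int.mul_ediv_cancel' (hdvd j)).symm⟩

theorem IsPrimitiveKummer.isCoprime {v : Fin 7 → ℤ} (hv : IsPrimitiveKummer v) {i : ℤ}
    (hdvd : ∀ j ≠ 6, i ∣ v j) : IsCoprime i (v 6) := by
  refine Int.isCoprime_iff_gcd_eq_one.mpr (Int.ofNat_inj.mp (hv.eq_one_of_dvd (by positivity) ?_))
  intro j
  by_cases hj : j = 6
  · exact hj ▸ Int.gcd_dvd_right i (v 6)
  · exact (Int.gcd_dvd_left i (v 6)).trans (hdvd j hj)

/-- **Squares and divisibilities of polarizations of hyperkähler fourfolds of Kummer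
type** (Subsection 1.2 of the paper).  If `h` is primitive in `U³ ⊕ ⟨-6⟩` with
`e := q(h,h) > 0` and divisibility `i` (the nonnegative generator of `q(h, Λ)`),
then either `i = 1` and `e ≡ 0 (mod 2)`, or `i = 2` and `e ≡ -6 (mod 8)`, or `i = 3`
and `e ≡ -6 (mod 18)`, or `i = 6` and `e ≡ -6 (mod 72)`. -/
theorem kummer_polarization_square_divisibility
    (h : Fin 7 → ℤ) (hprim : IsPrimitiveKummer h)
    (e : ℤ) (he : e = bbfKummerForm h h) (hepos : 0 < e)
    (i : ℤ) (hi0 : 0 ≤ i)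
    (higen : AddSubgroup.zmultiples i =
      AddSubgroup.closure {t : ℤ | ∃ x : Fin 7 → ℤ, t = bbfKummerForm h x}) :
    (i = 1 ∧ e ≡ 0 [ZMOD 2]) ∨ (i = 2 ∧ e ≡ -6 [ZMOD 8]) ∨
    (i = 3 ∧ e ≡ -6 [ZMOD 18]) ∨ (i = 6 ∧ e ≡ -6 [ZMOD 72]) := by
  have hdvd : ∀ x, i ∣ bbfKummerForm h x := fun x => Int.dvd_of_zmultiples_eq_closure higen ⟨x, rfl⟩
  have hcoord : ∀ j ≠ 6, i ∣ h j := fun j hj => dvd_apply_of_forall_dvd_bbfKummerForm hdvd hj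
  have hcop : IsCoprime i (h 6) := hprim.isCoprime hcoord
  have hi6 : i ∣ 6 := hcop.dvd_of_dvd_mul_right (dvd_six_mul_of_forall_dvd_bbfKummerForm hdvd)
  have hipos : 0 < i := by
    refine hi0.lt_of_ne fun hi => hepos.ne' ?_
    simpa [← hi, he] using hdvd h
  have hmod : e ≡ -6 [ZMOD 2 * i ^ 2] :=
    he ▸ (bbfKummerForm_self_modEq hcoord).trans (Int.neg_six_mul_sq_modEq_neg_six hipos hi6 hcop)
  rcases Int.eq_one_or_two_or_three_or_six_of_dvd_six hipos hi6 with rfl | rfl | rfl | rfl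
  · exact Or.inl ⟨rfl, hmod.trans (by decide)⟩
  · exact Or.inr (Or.inl ⟨rfl, hmod⟩)
  · exact Or.inr (Or.inr (Or.inl ⟨rfl, hmod⟩))
  · exact Or.inr (Or.inr (Or.inr ⟨rfl, hmod⟩))
end

section
/- Let Λ_K = ℤ⁷ carry the symmetric bilinear form q(x,y) = Σ_{i=0}^{2} (x_{2i}·y_{2i+1} + x_{2i+1}·y_{2i}) - 6·x₆·y₆ (the lattice U³ ⊕ ⟨-6⟩). Let e be a positive integer and i ∈ {1,2,3,6}, and assume the corresponding congruence holds: e ≡ 0 (mod 2) if i = 1; e ≡ -6 (mod 8) if i = 2; e ≡ -6 (mod 18) if i = 3; e ≡ -6 (mod 72) if i = 6. Then there exists a primitive h ∈ Λ_K with q(h,h) = e whose divisibility (the nonnegative generator of {q(h,x) : x ∈ Λ_K}) equals i. -/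
lemma kummer_eval (i a t : ℤ) (x : Fin 7 → ℤ) :
    bbfKummerForm ![i, a, 0, 0, 0, 0, t] x = i * x 1 + a * x 0 - 6 * t * x 6 := by
  show (i * x 1 + a * x 0) + ((0:ℤ) * x 3 + 0 * x 2) + ((0:ℤ) * x 5 + 0 * x 4)
      - 6 * t * x 6 = _
  ring

/-- Auxiliary construction: the vector `(i, a, 0, 0, 0, 0, t)` works whenever
`i` and `t` are coprime, `i ∣ a`, `i ∣ 6*t`, and `2*i*a - 6*t*t = e`. -/
lemma kummer_build (e i a t : ℤ) (hco : IsCoprime i t)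
    (hia : i ∣ a) (hit : i ∣ 6 * t) (hq : 2 * i * a - 6 * t * t = e) :
    ∃ h : Fin 7 → ℤ, IsPrimitiveKummer h ∧ bbfKummerForm h h = e ∧
      AddSubgroup.zmultiples i =
        AddSubgroup.closure {s : ℤ | ∃ x : Fin 7 → ℤ, s = bbfKummerForm h x} := by
  refine ⟨![i, a, 0, 0, 0, 0, t], ?_, ?_, ?_⟩
  · rintro ⟨k, u, hk, hu⟩
    have h0 : i = k * u 0 := by
      have := congrFun hu 0; simpa using this
    have h6 : t = k * u 6 := by
      have := congrFun hu 6; simpa using this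
    have hk1 : k ∣ 1 := by
      obtain ⟨p, q, hpq⟩ := hco
      exact ⟨p * u 0 + q * u 6, by rw [← hpq, h0, h6]; ring⟩
    have := Int.le_of_dvd one_pos hk1
    omega
  · rw [kummer_eval]
    show i * a + a * i - 6 * t * t = e
    linarith [hq]
  · apply le_antisymm
    · rw [AddSubgroup.zmultiples_le]
      apply AddSubgroup.subset_closure
      refine ⟨![0, 1, 0, 0, 0, 0, 0], ?_⟩
      rw [kummer_eval]
      show i = i * 1 + a * 0 - 6 * t * 0
      ring
    · rw [AddSubgroup.closure_le]
      rintro s ⟨x, rfl⟩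
      rw [SetLike.mem_coe, Int.mem_zmultiples_iff, kummer_eval]
      obtain ⟨a', rfl⟩ := hia
      obtain ⟨b', hb'⟩ := hit
      refine ⟨x 1 + a' * x 0 - b' * x 6, ?_⟩
      rw [mul_sub, mul_add]
      rw [show i * (b' * x 6) = 6 * t * x 6 by rw [← mul_assoc, ← hb']]
      ring

/-- **Existence of polarization classes of given square and divisibility on the
Kummer-type BBF lattice** (converse statement of Subsection 1.2 of the paper).
Given a positive integer `e` and `i ∈ {1,2,3,6}` satisfying the corresponding
congruence, there exists a primitive `h ∈ U³ ⊕ ⟨-6⟩` with `q(h,h) = e` and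
divisibility `i`. -/
theorem kummer_polarization_existence
    (e i : ℤ) (hepos : 0 < e)
    (hcong : (i = 1 ∧ e ≡ 0 [ZMOD 2]) ∨ (i = 2 ∧ e ≡ -6 [ZMOD 8]) ∨
      (i = 3 ∧ e ≡ -6 [ZMOD 18]) ∨ (i = 6 ∧ e ≡ -6 [ZMOD 72])) :
    ∃ h : Fin 7 → ℤ, IsPrimitiveKummer h ∧ bbfKummerForm h h = e ∧
      AddSubgroup.zmultiples i =
        AddSubgroup.closure {t : ℤ | ∃ x : Fin 7 → ℤ, t = bbfKummerForm h x} := by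
  rcases hcong with ⟨rfl, hc⟩ | ⟨rfl, hc⟩ | ⟨rfl, hc⟩ | ⟨rfl, hc⟩
  · obtain ⟨k, hk⟩ : (2:ℤ) ∣ e := by have := Int.ModEq.dvd hc; omega
    exact kummer_build e 1 k 0 isCoprime_one_left ⟨k, (one_mul k).symm⟩ ⟨0, by ring⟩
      (by omega)
  · obtain ⟨k, hk⟩ : (8:ℤ) ∣ e + 6 := by have := Int.ModEq.dvd hc; omega
    exact kummer_build e 2 (2 * k) 1 (isCoprime_one_right) ⟨k, rfl⟩ ⟨3, by ring⟩ (by omega)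
  · obtain ⟨k, hk⟩ : (18:ℤ) ∣ e + 6 := by have := Int.ModEq.dvd hc; omega
    exact kummer_build e 3 (3 * k) 1 (isCoprime_one_right) ⟨k, rfl⟩ ⟨2, by ring⟩ (by omega)
  · obtain ⟨k, hk⟩ : (72:ℤ) ∣ e + 6 := by have := Int.ModEq.dvd hc; omega
    exact kummer_build e 6 (6 * k) 1 (isCoprime_one_right) ⟨k, rfl⟩ ⟨1, by ring⟩ (by omega)
end

section
/- Let T be an abelian group in which every element t satisfies 4·t = 0. Let G = T × T and let H = {g ∈ G : 2·g = 0} be its 2-torsion subgroup. Define σ and τ from G to itself by σ(a,b) = (b,a) and τ(a,b) = (a, -a-b). If g ∈ G is such that the coset g + H is invariant as a set under both σ and τ (i.e. σ(g+H) = g+H and τ(g+H) = g+H), then g ∈ H, i.e. g + H = H. -/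
/-- **Monodromy-invariant cosets** (group-theoretic content of Corollary 8.5 of the
paper).  Let `T` be an abelian group of exponent `4`, `G = T × T`, and let `H` be
the `2`-torsion subgroup of `G`.  Let `σ(a,b) = (b,a)` and `τ(a,b) = (a, -a-b)`.
If the coset `g + H` is invariant (as a set) under both `σ` and `τ`, then `g ∈ H`,
i.e. `g + H = H`. -/
theorem monodromy_invariant_coset
    {T : Type*} [AddCommGroup T] (h4 : ∀ t : T, 4 • t = 0)
    (σ τ : T × T → T × T)
    (hσ : ∀ p : T × T, σ p = (p.2, p.1))
    (hτ : ∀ p : T × T, τ p = (p.1, -p.1 - p.2))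
    (H : AddSubgroup (T × T)) (hH : ∀ p : T × T, p ∈ H ↔ 2 • p = 0)
    (g : T × T)
    (hσinv : σ '' {x : T × T | x - g ∈ H} = {x : T × T | x - g ∈ H})
    (hτinv : τ '' {x : T × T | x - g ∈ H} = {x : T × T | x - g ∈ H}) :
    g ∈ H := by
  have hg : g ∈ {x : T × T | x - g ∈ H} := by
    simp [Set.mem_setOf_eq, sub_self, H.zero_mem]
  have hσg : σ g ∈ {x : T × T | x - g ∈ H} := by
    rw [← hσinv]; exact ⟨g, hg, rfl⟩
  have hτg : τ g ∈ {x : T × T | x - g ∈ H} := by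
    rw [← hτinv]; exact ⟨g, hg, rfl⟩
  rw [Set.mem_setOf_eq, hσ, hH, Prod.smul_mk, Prod.ext_iff] at hσg
  rw [Set.mem_setOf_eq, hτ, hH, Prod.smul_mk, Prod.ext_iff] at hτg
  obtain ⟨a, b⟩ := g
  simp only [Prod.fst, Prod.snd, Prod.mk_sub_mk] at hσg hτg
  have h1 : 2 • (b - a) = 0 := hσg.1
  have h2 : 2 • (-a - b - b) = 0 := hτg.2
  have h4b : 4 • b = 0 := h4 b
  rw [hH, Prod.smul_mk, Prod.mk_eq_zero]
  rw [smul_sub, sub_eq_zero] at h1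
  have h2' : 2 • (-a - b - b) + 4 • b = 0 := by simp [h2, h4b]
  have ha : 2 • a = 0 := by
    have : -(2 • a) = 0 := by rw [← h2']; abel
    simpa [neg_eq_zero] using this
  exact ⟨ha, h1.trans ha⟩
end
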